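/- For all real x > 0, the Mellin–Barnes representation Ei(-x) = -(1/(2πi)) ∫_{c-i∞}^{c+i∞} x^(-s) Γ(s)/s ds holds for any c > 0, where the contour integral is the limit of integrals over vertical segments. -/

import Mathlib

open MeasureTheory Set

/-- The exponential integral: for `y < 0`, `Ei y = -∫_{-y}^∞ e^{-t}/t dt`. -/
noncomputable def Ei (y : ℝ) : ℝ := -∫ t in Ioi (-y), Real.exp (-t) / t

/-!
With `E₁(x) = ∫_x^∞ e^{-u}/u du` we have `Ei(-x) = -E₁(x)`. Integrating by parts against `t^s/s`,
the Mellin transform of `E₁` is `Γ(s)/s` for `Re s > 0`; the boundary terms vanish because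
`E₁(t) ≤ e^{-t}` for `t ≥ 1` and `E₁(t) ≤ Γ(ε) t^{-ε}` for every `ε > 0`. Since
`Γ(s)/s = Γ(s+1)/s²` and `‖Γ(s+1)‖ ≤ Γ(Re s + 1)`, the transform is integrable on every vertical
line `Re s = c > 0`, so Mellin inversion recovers `E₁(x)` as the contour integral.
-/

open Filter Topology Asymptotics

lemma isBigO_ofReal_cpow_rpow_re {l : Filter ℝ} (hl : ∀ᶠ x in l, 0 < x) (s : ℂ) :
    (fun x : ℝ => (x : ℂ) ^ s) =O[l] (· ^ s.re) :=
  IsBigO.of_bound 1 <| hl.mono fun x hx => by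
    rw [Complex.norm_cpow_eq_rpow_re_of_pos hx, Real.norm_of_nonneg (Real.rpow_nonneg hx.le _),
      one_mul]

lemma norm_Gamma_le_Gamma_re {s : ℂ} (hs : 0 < s.re) : ‖Complex.Gamma s‖ ≤ Real.Gamma s.re := by
  rw [Complex.Gamma_eq_integral hs, Complex.GammaIntegral, Real.Gamma_eq_integral hs]
  refine (norm_integral_le_integral_norm _).trans_eq <|
    setIntegral_congr_fun measurableSet_Ioi fun t (ht : 0 < t) => ?_
  rw [norm_mul, Complex.norm_real, Real.norm_of_nonneg (Real.exp_pos _).le,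
    Complex.norm_cpow_eq_rpow_re_of_pos ht, Complex.sub_re, Complex.one_re]

lemma integrable_inv_sq_add_sq {c : ℝ} (hc : c ≠ 0) : Integrable fun y : ℝ => (c ^ 2 + y ^ 2)⁻¹ :=
  (integrable_inv_one_add_sq.comp_div hc).const_mul (c ^ 2)⁻¹ |>.congr <| ae_of_all _ fun y => by
    change (c ^ 2)⁻¹ * (1 + (y / c) ^ 2)⁻¹ = (c ^ 2 + y ^ 2)⁻¹
    field_simp

noncomputable def expIntegralE1 (x : ℝ) : ℝ := ∫ u in Ioi x, Real.exp (-u) / u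

lemma integrableOn_exp_neg_div_Ioi {a : ℝ} (ha : 0 < a) :
    IntegrableOn (fun u => Real.exp (-u) / u) (Ioi a) := by
  refine ((exp_neg_integrableOn_Ioi a one_pos).const_mul a⁻¹).mono' ?_ ?_
  · exact (by fun_prop : Measurable fun u : ℝ => Real.exp (-u) / u).aestronglyMeasurable
  · filter_upwards [ae_restrict_mem measurableSet_Ioi] with u (hu : a < u)
    rw [Real.norm_of_nonneg (by have := ha.trans hu; positivity), neg_one_mul, inv_mul_eq_div]
    gcongr

lemma expIntegralE1_nonneg {x : ℝ} (hx : 0 ≤ x) : 0 ≤ expIntegralE1 x :=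
  setIntegral_nonneg measurableSet_Ioi fun u (hu : x < u) => by
    have := hx.trans_lt hu; positivity

lemma expIntegralE1_le_exp_neg {x : ℝ} (hx : 1 ≤ x) : expIntegralE1 x ≤ Real.exp (-x) := by
  calc expIntegralE1 x ≤ ∫ u in Ioi x, Real.exp (-u) := by
        refine setIntegral_mono_on (integrableOn_exp_neg_div_Ioi (by linarith))
          (by simpa using exp_neg_integrableOn_Ioi x one_pos) measurableSet_Ioi fun u hu => ?_
        exact div_le_self (Real.exp_pos _).le (hx.trans (le_of_lt hu))
    _ = Real.exp (-x) := integral_exp_neg_Ioi x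

lemma expIntegralE1_le_Gamma_mul_rpow_neg {ε x : ℝ} (hε : 0 < ε) (hx : 0 < x) :
    expIntegralE1 x ≤ Real.Gamma ε * x ^ (-ε) := by
  have hΓ := Real.GammaIntegral_convergent hε
  calc expIntegralE1 x
      ≤ ∫ u in Ioi x, x ^ (-ε) * (Real.exp (-u) * u ^ (ε - 1)) := by
        refine setIntegral_mono_on (integrableOn_exp_neg_div_Ioi hx)
          ((hΓ.mono_set (Ioi_subset_Ioi hx.le)).const_mul _) measurableSet_Ioi
          fun u (hu : x < u) => ?_
        have hu0 := hx.trans hu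
        calc Real.exp (-u) / u = u ^ (-ε) * (Real.exp (-u) * u ^ (ε - 1)) := by
              rw [div_eq_mul_inv, ← Real.rpow_neg_one, mul_left_comm, ← Real.rpow_add hu0]
              ring_nf
          _ ≤ x ^ (-ε) * (Real.exp (-u) * u ^ (ε - 1)) := by
              have := Real.rpow_le_rpow_of_nonpos hx hu.le (neg_nonpos.2 hε.le)
              gcongr
    _ ≤ ∫ u in Ioi 0, x ^ (-ε) * (Real.exp (-u) * u ^ (ε - 1)) := by
        refine setIntegral_mono_set (hΓ.const_mul _) ?_ (Ioi_subset_Ioi hx.le).eventuallyLE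
        filter_upwards [ae_restrict_mem measurableSet_Ioi] with u (hu : 0 < u)
        positivity
    _ = Real.Gamma ε * x ^ (-ε) := by
        rw [integral_const_mul, Real.Gamma_eq_integral hε, mul_comm]

lemma hasDerivAt_expIntegralE1 {x : ℝ} (hx : 0 < x) :
    HasDerivAt expIntegralE1 (-(Real.exp (-x) / x)) x := by
  have hcont : ContinuousOn (fun u : ℝ => Real.exp (-u) / u) (Ioi 0) :=
    (by fun_prop : Continuous fun u : ℝ => Real.exp (-u)).continuousOn.div continuousOn_id
      fun u hu => (ne_of_gt hu)
  have hsplit : ∀ y ∈ Ioi (0 : ℝ),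
      expIntegralE1 y = expIntegralE1 1 - ∫ u in (1 : ℝ)..y, Real.exp (-u) / u := fun y hy => by
    rw [expIntegralE1, expIntegralE1, ← intervalIntegral.integral_Ioi_sub_Ioi'
      (integrableOn_exp_neg_div_Ioi one_pos) (integrableOn_exp_neg_div_Ioi hy), sub_sub_cancel]
  have hint : IntervalIntegrable (fun u : ℝ => Real.exp (-u) / u) volume 1 x :=
    (hcont.mono fun u hu => (lt_min one_pos hx).trans_le hu.1).intervalIntegrable
  have hFTC := intervalIntegral.integral_hasDerivAt_right hint
    (hcont.stronglyMeasurableAtFilter isOpen_Ioi x hx) (hcont.continuousAt (Ioi_mem_nhds hx))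
  exact (hFTC.const_sub _).congr_of_eventuallyEq (eventually_of_mem (Ioi_mem_nhds hx) hsplit)

lemma continuousOn_expIntegralE1 : ContinuousOn expIntegralE1 (Ioi 0) :=
  fun _ hx => (hasDerivAt_expIntegralE1 hx).continuousAt.continuousWithinAt

lemma isBigO_expIntegralE1_atTop : expIntegralE1 =O[atTop] fun x => Real.exp (-x) :=
  IsBigO.of_bound 1 <| (eventually_ge_atTop 1).mono fun x hx => by
    rw [Real.norm_of_nonneg (expIntegralE1_nonneg (by linarith)), Real.norm_of_nonneg
      (Real.exp_pos _).le, one_mul]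
    exact expIntegralE1_le_exp_neg hx

lemma isBigO_expIntegralE1_nhdsGT {ε : ℝ} (hε : 0 < ε) :
    expIntegralE1 =O[𝓝[>] 0] (· ^ (-ε)) :=
  IsBigO.of_bound (Real.Gamma ε) <| eventually_mem_nhdsWithin.mono fun x (hx : 0 < x) => by
    rw [Real.norm_of_nonneg (expIntegralE1_nonneg hx.le), Real.norm_of_nonneg
      (Real.rpow_nonneg hx.le _)]
    exact expIntegralE1_le_Gamma_mul_rpow_neg hε hx

lemma mellinConvergent_expIntegralE1 {s : ℂ} (hs : 0 < s.re) :
    MellinConvergent (fun x => (expIntegralE1 x : ℂ)) s :=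
  mellinConvergent_of_isBigO_rpow_exp one_pos
    (Complex.continuous_ofReal.comp_continuousOn continuousOn_expIntegralE1 |>.locallyIntegrableOn
      measurableSet_Ioi)
    (Complex.isBigO_ofReal_left.2 <| by simpa only [neg_one_mul] using isBigO_expIntegralE1_atTop)
    (Complex.isBigO_ofReal_left.2 <| isBigO_expIntegralE1_nhdsGT (half_pos hs)) (half_lt_self hs)

lemma tendsto_cpow_mul_expIntegralE1_nhdsGT {s : ℂ} (hs : 0 < s.re) :
    Tendsto (fun x : ℝ => (x : ℂ) ^ s * expIntegralE1 x) (𝓝[>] 0) (𝓝 0) := by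
  have hO := (isBigO_ofReal_cpow_rpow_re eventually_mem_nhdsWithin s).mul
    (Complex.isBigO_ofReal_left.2 <| isBigO_expIntegralE1_nhdsGT (half_pos hs))
  refine hO.trans_tendsto ?_
  have : Tendsto (fun x : ℝ => x ^ (s.re / 2)) (𝓝[>] 0) (𝓝 0) := by
    simpa [Real.zero_rpow (half_pos hs).ne'] using
      ((Real.continuousAt_rpow_const 0 _ (Or.inr (half_pos hs).le)).tendsto.mono_left
        nhdsWithin_le_nhds)
  refine this.congr' (eventually_mem_nhdsWithin.mono fun x (hx : 0 < x) => ?_)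
  change _ = x ^ s.re * x ^ (-(s.re / 2))
  rw [← Real.rpow_add hx]
  ring_nf

lemma tendsto_cpow_mul_expIntegralE1_atTop (s : ℂ) :
    Tendsto (fun x : ℝ => (x : ℂ) ^ s * expIntegralE1 x) atTop (𝓝 0) := by
  have hO := (isBigO_ofReal_cpow_rpow_re (eventually_gt_atTop 0) s).mul
    (Complex.isBigO_ofReal_left.2 isBigO_expIntegralE1_atTop)
  refine hO.trans_tendsto ?_
  simpa only [neg_one_mul] using tendsto_rpow_mul_exp_neg_mul_atTop_nhds_zero s.re 1 one_pos

lemma mellin_expIntegralE1 {s : ℂ} (hs : 0 < s.re) :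
    mellin (fun x => (expIntegralE1 x : ℂ)) s = Complex.Gamma s / s := by
  have hs0 : s ≠ 0 := fun h => by simp [h] at hs
  have hu : ∀ x ∈ Ioi (0 : ℝ), HasDerivAt (fun y : ℝ => (y : ℂ) ^ s / s) ((x : ℂ) ^ (s - 1)) x :=
    fun x hx => by
      simpa using hasDerivAt_ofReal_cpow_const' (ne_of_gt hx) (r := s - 1) (by simpa using hs0)
  have hv : ∀ x ∈ Ioi (0 : ℝ), HasDerivAt (fun y : ℝ => (expIntegralE1 y : ℂ))
      ((-(Real.exp (-x) / x) : ℝ) : ℂ) x :=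
    fun x hx => (hasDerivAt_expIntegralE1 hx).ofReal_comp
  have huv' : ∀ x ∈ Ioi (0 : ℝ), (x : ℂ) ^ s / s * ((-(Real.exp (-x) / x) : ℝ) : ℂ)
      = -((Real.exp (-x) : ℂ) * (x : ℂ) ^ (s - 1) / s) := fun x (hx : 0 < x) => by
    have hx0 : (x : ℂ) ≠ 0 := by exact_mod_cast hx.ne'
    rw [Complex.cpow_sub _ _ hx0, Complex.cpow_one]
    push_cast
    ring
  have hparts := integral_Ioi_mul_deriv_eq_deriv_mul hu hv
    (IntegrableOn.congr_fun ((Complex.GammaIntegral_convergent hs).div_const s).neg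
      (fun x hx => (huv' x hx).symm) measurableSet_Ioi)
    (by simpa only [Pi.mul_def, MellinConvergent, smul_eq_mul] using
      mellinConvergent_expIntegralE1 hs)
    (by simpa only [Pi.mul_def, div_mul_eq_mul_div, zero_div] using
      (tendsto_cpow_mul_expIntegralE1_nhdsGT hs).div_const s)
    (by simpa only [Pi.mul_def, div_mul_eq_mul_div, zero_div] using
      (tendsto_cpow_mul_expIntegralE1_atTop s).div_const s)
  rw [setIntegral_congr_fun measurableSet_Ioi huv', integral_neg, integral_div, sub_zero,
    zero_sub, neg_inj] at hparts
  rw [mellin, Complex.Gamma_eq_integral hs, Complex.GammaIntegral, hparts]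
  simp only [smul_eq_mul]

lemma verticalIntegrable_Gamma_div_self {c : ℝ} (hc : 0 < c) :
    Complex.VerticalIntegrable (fun s => Complex.Gamma s / s) c := by
  have hne : ∀ y : ℝ, (c : ℂ) + y * Complex.I ≠ 0 := fun y h => by
    simpa [hc.ne'] using congrArg Complex.re h
  have hshift : ∀ y : ℝ, Complex.Gamma (c + y * Complex.I) / (c + y * Complex.I)
      = Complex.Gamma (c + y * Complex.I + 1) / (c + y * Complex.I) ^ 2 := fun y => by
    rw [Complex.Gamma_add_one _ (hne y)]
    field_simp [hne y]
  have hcont : Continuous fun y : ℝ =>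
      Complex.Gamma (c + y * Complex.I + 1) / (c + y * Complex.I) ^ 2 := by
    refine Continuous.div ?_ (by fun_prop) fun y => pow_ne_zero 2 (hne y)
    refine continuous_iff_continuousAt.2 fun y => ContinuousAt.comp (g := Complex.Gamma) ?_
      (by fun_prop)
    refine (Complex.differentiableAt_Gamma _ fun m h => ?_).continuousAt
    have hm : c + 1 = -m := by simpa using congrArg Complex.re h
    linarith [m.cast_nonneg (α := ℝ)]
  unfold Complex.VerticalIntegrable
  simp_rw [hshift]
  refine ((integrable_inv_sq_add_sq hc.ne').const_mul (Real.Gamma (c + 1))).mono'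
    hcont.aestronglyMeasurable (ae_of_all _ fun y => ?_)
  have hnorm : ‖(c : ℂ) + y * Complex.I‖ ^ 2 = c ^ 2 + y ^ 2 := by
    rw [Complex.sq_norm, Complex.normSq_add_mul_I]
  rw [norm_div, norm_pow, hnorm, div_eq_mul_inv]
  gcongr
  simpa using norm_Gamma_le_Gamma_re (s := c + y * Complex.I + 1)
    (by simpa using hc.trans (lt_add_one c))

lemma expIntegralE1_eq_mellinInv {x : ℝ} (hx : 0 < x) {c : ℝ} (hc : 0 < c) :
    (expIntegralE1 x : ℂ) = mellinInv c (fun s => Complex.Gamma s / s) x := by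
  have hmellin : ∀ y : ℝ, mellin (fun x => (expIntegralE1 x : ℂ)) (c + y * Complex.I)
      = Complex.Gamma (c + y * Complex.I) / (c + y * Complex.I) := fun y =>
    mellin_expIntegralE1 (by simpa using hc)
  have hinv := mellinInv_mellin_eq c _ hx (mellinConvergent_expIntegralE1 (by simpa using hc))
    ((verticalIntegrable_Gamma_div_self hc).congr (ae_of_all _ fun y => (hmellin y).symm))
    (Complex.continuous_ofReal.continuousAt.comp (hasDerivAt_expIntegralE1 hx).continuousAt)
  rw [← hinv]
  simp only [mellinInv, hmellin]

/-- Mellin–Barnes representation of the exponential integral: for `x > 0` and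
any `c > 0`, `Ei(-x) = -(1/(2πi)) ∫_{c-i∞}^{c+i∞} x^{-s} Γ(s)/s ds`, where the
contour integral along the vertical line `Re s = c` is parametrized as
`s = c + it`, `ds = i dt`. -/
theorem Ei_mellinBarnes (x : ℝ) (hx : 0 < x) (c : ℝ) (hc : 0 < c) :
    (Ei (-x) : ℂ) =
      -(1 / (2 * Real.pi * Complex.I)) *
        ∫ t : ℝ, (x : ℂ) ^ (-(c + t * Complex.I)) *
          Complex.Gamma (c + t * Complex.I) / (c + t * Complex.I) * Complex.I := by
  have hEi : Ei (-x) = -expIntegralE1 x := by rw [Ei, neg_neg, expIntegralE1]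
  rw [hEi, Complex.ofReal_neg, expIntegralE1_eq_mellinInv hx hc, mellinInv, integral_mul_const]
  simp only [smul_eq_mul, mul_div_assoc, Complex.real_smul]
  generalize (∫ y : ℝ, _ : ℂ) = J
  have hπ : (Real.pi : ℂ) ≠ 0 := by exact_mod_cast Real.pi_ne_zero
  push_cast
  field_simp
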